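/- arXiv:2303.15239 — 2 statements merged into one kernel-verified Lean document; each statement's English description precedes it below -/
import Mathlib

section
/- Under the assumptions that all a_i ≤ b/m (integer m > 1), the greedy property holds, and aᵀx⁰ ≥ (m-1)b/m, every excluded item i (x⁰_i = 0 with q_i maximal among excluded items) satisfies q_i ≤ p⁰/(m-1). -/
open Finset

/-- Under the assumptions that all `a i ≤ b / m` (integer `m > 1`), the greedy
property holds, and `aᵀx⁰ ≥ (m-1)b/m`, every excluded item `i` (with `q i`
maximal among excluded items) satisfies `q i ≤ p⁰ / (m-1)`. -/
theorem excluded_utility_bound (n : ℕ) (q a : Fin n → ℝ) (b : ℝ) (m : ℕ)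
    (hm : 1 < m) (hb : 0 < b)
    (hq : ∀ i, 0 ≤ q i) (ha : ∀ i, 0 < a i) (ham : ∀ i, a i ≤ b / m)
    (x0 : Fin n → ℝ) (hx01 : ∀ i, x0 i = 0 ∨ x0 i = 1)
    (p0 : ℝ) (hp0 : p0 = ∑ i, q i * x0 i)
    (hgas : (m - 1 : ℝ) * b / m ≤ ∑ i, a i * x0 i)
    (hgreedy : ∀ i j : Fin n, x0 i = 0 → x0 j = 1 → q i / a i ≤ q j / a j) :
    ∀ i : Fin n, x0 i = 0 → (∀ j, x0 j = 0 → q j ≤ q i) →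
      q i ≤ p0 / (m - 1) := by
  intro i hi _
  have hm1 : (0:ℝ) < (m:ℝ) - 1 := by
    have : (1:ℝ) < (m:ℝ) := by exact_mod_cast hm
    linarith
  have hai := ha i
  have hr : 0 ≤ q i / a i := div_nonneg (hq i) hai.le
  -- termwise: (q i / a i) * (a j * x0 j) ≤ q j * x0 j
  have hterm : ∀ j, (q i / a i) * (a j * x0 j) ≤ q j * x0 j := by
    intro j
    rcases hx01 j with h0 | h1
    · simp [h0]
    · have hgj := hgreedy i j hi h1
      have haj := ha j
      rw [h1, mul_one, mul_one]
      calc (q i / a i) * a j ≤ (q j / a j) * a j :=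
            mul_le_mul_of_nonneg_right hgj haj.le
        _ = q j := by field_simp
  have hsum : (q i / a i) * (∑ j, a j * x0 j) ≤ p0 := by
    rw [hp0, Finset.mul_sum]
    exact Finset.sum_le_sum fun j _ => hterm j
  have hsa : ((m:ℝ) - 1) * a i ≤ ∑ j, a j * x0 j := by
    have h1 : ((m:ℝ) - 1) * a i ≤ ((m:ℝ) - 1) * (b / m) :=
      mul_le_mul_of_nonneg_left (ham i) hm1.le
    have h2 : ((m:ℝ) - 1) * (b / m) = ((m:ℝ) - 1) * b / m := by ring
    linarith [hgas]
  have key : ((m:ℝ) - 1) * q i ≤ p0 := by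
    have := mul_le_mul_of_nonneg_left hsa hr
    have heq : (q i / a i) * (((m:ℝ) - 1) * a i) = ((m:ℝ) - 1) * q i := by
      field_simp
    linarith [le_trans (heq ▸ this) hsum]
  rw [le_div_iff₀ hm1]
  linarith
end

section
/- If p⁰ + q_i ≥ r⋆ where q_i ≤ p⁰/(m-1), r⋆ ≥ p⋆ ≥ p⁰, then (m/(m-1))·p⁰ ≥ p⋆ ≥ p⁰; i.e., the greedy-rounding heuristic is an (m-1)/m-approximation to the 0-1 knapsack optimum when all item sizes are at most b/m. -/
/-- If `p⁰ + qᵢ ≥ r⋆` where `qᵢ ≤ p⁰/(m-1)` and `r⋆ ≥ p⋆ ≥ p⁰`, then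
`(m/(m-1))·p⁰ ≥ p⋆ ≥ p⁰`: the greedy-rounding heuristic is an
`(m-1)/m`-approximation to the 0-1 knapsack optimum. -/
theorem greedy_rounding_approx (m : ℕ) (hm : 1 < m)
    (p0 qi rstar pstar : ℝ)
    (h1 : rstar ≤ p0 + qi)
    (h2 : qi ≤ p0 / (m - 1))
    (h3 : pstar ≤ rstar)
    (h4 : p0 ≤ pstar) :
    pstar ≤ (m : ℝ) / (m - 1) * p0 ∧ p0 ≤ pstar := by
  have hm1 : (0 : ℝ) < (m : ℝ) - 1 := by
    have : (1 : ℝ) < m := by exact_mod_cast hm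
    linarith
  refine ⟨?_, h4⟩
  have h2' : qi * ((m : ℝ) - 1) ≤ p0 := by
    rw [← le_div_iff₀ hm1]; exact h2
  rw [div_mul_eq_mul_div, le_div_iff₀ hm1]
  nlinarith
end
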